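/- Under the FEC algorithm with no initial pending moves, at every point of any ASYNC execution both robots lie on the initial segment [p,q], and neither robot ever moves away from the other; consequently the total distance traveled by both robots is at most the initial distance dist p q. -/
import Mathlib


inductive RColor | Black | White
deriving DecidableEq

/-- Look-Compute outcome of the FEC algorithm: given own color and observed
color, return the new color and whether to move to the midpoint.
Only the snapshot {White, White} triggers a move (switching to Black);
Black observing Black switches to White and stays; otherwise stay. -/
def fecLC : RColor → RColor → RColor × Bool
  | RColor.White, RColor.White => (RColor.Black, true)
  | RColor.White, RColor.Black => (RColor.White, false)
  | RColor.Black, RColor.Black => (RColor.White, false)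
  | RColor.Black, RColor.White => (RColor.Black, false)

structure FECRobot where
  pos : EuclideanSpace ℝ (Fin 2)
  col : RColor
  snap : Option (EuclideanSpace ℝ (Fin 2) × RColor)
  pending : Option (EuclideanSpace ℝ (Fin 2))

abbrev FECConfig := FECRobot × FECRobot

/-- ASYNC steps of the FEC algorithm: separate Look, Compute and (possibly
non-rigid) Move phases, one robot at a time. -/
inductive FECStep : FECConfig → FECConfig → Prop
  | look₁ (c : FECConfig) (h : c.1.snap = none) (hp : c.1.pending = none) :
      FECStep c ({ c.1 with snap := some (c.2.pos, c.2.col) }, c.2)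
  | look₂ (c : FECConfig) (h : c.2.snap = none) (hp : c.2.pending = none) :
      FECStep c (c.1, { c.2 with snap := some (c.1.pos, c.1.col) })
  | compute₁ (c : FECConfig) (s : EuclideanSpace ℝ (Fin 2) × RColor)
      (h : c.1.snap = some s) :
      FECStep c ({ c.1 with
        col := (fecLC c.1.col s.2).1
        snap := none
        pending := if (fecLC c.1.col s.2).2 then some (midpoint ℝ c.1.pos s.1)
                   else none }, c.2)
  | compute₂ (c : FECConfig) (s : EuclideanSpace ℝ (Fin 2) × RColor)
      (h : c.2.snap = some s) :
      FECStep c (c.1, { c.2 with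
        col := (fecLC c.2.col s.2).1
        snap := none
        pending := if (fecLC c.2.col s.2).2 then some (midpoint ℝ c.2.pos s.1)
                   else none })
  | move₁ (c : FECConfig) (t : EuclideanSpace ℝ (Fin 2))
      (h : c.1.pending = some t) (y : EuclideanSpace ℝ (Fin 2))
      (hy : y ∈ segment ℝ c.1.pos t) :
      FECStep c ({ c.1 with pos := y, pending := none }, c.2)
  | move₂ (c : FECConfig) (t : EuclideanSpace ℝ (Fin 2))
      (h : c.2.pending = some t) (y : EuclideanSpace ℝ (Fin 2))
      (hy : y ∈ segment ℝ c.2.pos t) :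
      FECStep c (c.1, { c.2 with pos := y, pending := none })

private lemma fec_wbtw_shift {a y t b : EuclideanSpace ℝ (Fin 2)}
    (h1 : Wbtw ℝ a t b) (h2 : Wbtw ℝ a y t) : Wbtw ℝ y t b := by
  obtain ⟨r, hr, rfl⟩ := h1
  obtain ⟨s, hs, rfl⟩ := h2
  have key : (AffineMap.lineMap a (AffineMap.lineMap a b r)) s
      = (AffineMap.lineMap a b) (s * r) := by
    simp only [AffineMap.lineMap_apply, vsub_eq_sub, vadd_eq_add, smul_smul]
    module
  rw [key]
  have hsr1 : s * r ≤ 1 := le_trans (mul_le_of_le_one_left hr.1 hs.2) hr.2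
  have h01 : Wbtw ℝ (s * r) r 1 := by
    rw [← mem_segment_iff_wbtw, segment_eq_Icc hsr1]
    exact ⟨mul_le_of_le_one_left hr.1 hs.2, hr.2⟩
  simpa using h01.map (AffineMap.lineMap a b)

private lemma fec_seg_shift {x₁ x₂ t y : EuclideanSpace ℝ (Fin 2)}
    (ht : t ∈ segment ℝ x₁ x₂) (hy : y ∈ segment ℝ x₁ t) : t ∈ segment ℝ y x₂ := by
  rw [mem_segment_iff_wbtw] at *
  exact fec_wbtw_shift ht hy

private lemma fec_seg_sub {x₁ x₂ t : EuclideanSpace ℝ (Fin 2)}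
    (ht : t ∈ segment ℝ x₁ x₂) : segment ℝ x₁ t ⊆ segment ℝ x₁ x₂ :=
  (convex_segment x₁ x₂).segment_subset (left_mem_segment ℝ x₁ x₂) ht

/-- The inductive invariant of the FEC algorithm. -/
structure FECInv (p q : EuclideanSpace ℝ (Fin 2)) (c : FECConfig) : Prop where
  pos₁ : c.1.pos ∈ segment ℝ p q
  pos₂ : c.2.pos ∈ segment ℝ p q
  sp₁ : c.1.snap ≠ none → c.1.pending = none
  sp₂ : c.2.snap ≠ none → c.2.pending = none
  pcol₁ : ∀ t, c.1.pending = some t → c.1.col = RColor.Black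
  pcol₂ : ∀ t, c.2.pending = some t → c.2.col = RColor.Black
  pseg₁ : ∀ t, c.1.pending = some t → t ∈ segment ℝ c.1.pos c.2.pos
  pseg₂ : ∀ t, c.2.pending = some t → t ∈ segment ℝ c.1.pos c.2.pos
  live₁ : ∀ s, c.1.col = RColor.White → c.1.snap = some (s, RColor.White) →
      midpoint ℝ c.1.pos s ∈ segment ℝ c.1.pos c.2.pos
  live₂ : ∀ s, c.2.col = RColor.White → c.2.snap = some (s, RColor.White) →
      midpoint ℝ c.2.pos s ∈ segment ℝ c.1.pos c.2.pos
  eqpp : ∀ t₁ t₂, c.1.pending = some t₁ → c.2.pending = some t₂ → t₁ = t₂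
  eqps₁ : ∀ t s, c.1.pending = some t → c.2.col = RColor.White →
      c.2.snap = some (s, RColor.White) → t = midpoint ℝ c.2.pos s
  eqps₂ : ∀ t s, c.2.pending = some t → c.1.col = RColor.White →
      c.1.snap = some (s, RColor.White) → t = midpoint ℝ c.1.pos s
  fresh₁ : ∀ s, c.1.col = RColor.White → c.1.snap = some (s, RColor.White) →
      c.2.col = RColor.White → c.2.pending = none → s = c.2.pos
  fresh₂ : ∀ s, c.2.col = RColor.White → c.2.snap = some (s, RColor.White) →
      c.1.col = RColor.White → c.1.pending = none → s = c.1.pos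
  nobb₁ : ∀ s s', c.1.col = RColor.White → c.1.snap = some (s, RColor.White) →
      c.2.col = RColor.Black → c.2.snap = some (s', RColor.Black) → False
  nobb₂ : ∀ s s', c.2.col = RColor.White → c.2.snap = some (s, RColor.White) →
      c.1.col = RColor.Black → c.1.snap = some (s', RColor.Black) → False

private lemma FECInv.swap {p q : EuclideanSpace ℝ (Fin 2)} {c : FECConfig}
    (h : FECInv p q c) : FECInv p q (c.2, c.1) := by
  obtain ⟨P1,P2,SP1,SP2,PC1,PC2,PS1,PS2,L1,L2,EPP,EPS1,EPS2,F1,F2,NB1,NB2⟩ := h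
  refine ⟨P2,P1,SP2,SP1,PC2,PC1, ?_, ?_, ?_, ?_, ?_, EPS2, EPS1, F2, F1, NB2, NB1⟩
  · intro t ht; rw [segment_symm]; exact PS2 t ht
  · intro t ht; rw [segment_symm]; exact PS1 t ht
  · intro s h1 h2; rw [segment_symm]; exact L2 s h1 h2
  · intro s h1 h2; rw [segment_symm]; exact L1 s h1 h2
  · intro t₁ t₂ h1 h2; exact (EPP t₂ t₁ h2 h1).symm

private lemma FECStep.swap' {c c' : FECConfig} (h : FECStep c c') :
    FECStep (c.2, c.1) (c'.2, c'.1) := by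
  cases h with
  | look₁ h hp => exact FECStep.look₂ (c.2, c.1) h hp
  | look₂ h hp => exact FECStep.look₁ (c.2, c.1) h hp
  | compute₁ s h => exact FECStep.compute₂ (c.2, c.1) s h
  | compute₂ s h => exact FECStep.compute₁ (c.2, c.1) s h
  | move₁ t h y hy => exact FECStep.move₂ (c.2, c.1) t h y hy
  | move₂ t h y hy => exact FECStep.move₁ (c.2, c.1) t h y hy

private lemma fec_pres_look {p q : EuclideanSpace ℝ (Fin 2)} {c : FECConfig}
    (hI : FECInv p q c) (h : c.1.snap = none) (hp : c.1.pending = none) :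
    FECInv p q ({ c.1 with snap := some (c.2.pos, c.2.col) }, c.2) := by
  obtain ⟨⟨x₁,k₁,sn₁,pd₁⟩, ⟨x₂,k₂,sn₂,pd₂⟩⟩ := c
  obtain ⟨P1,P2,SP1,SP2,PC1,PC2,PS1,PS2,L1,L2,EPP,EPS1,EPS2,F1,F2,NB1,NB2⟩ := hI
  dsimp only at *
  subst h; subst hp
  refine ⟨P1, P2, fun _ => rfl, SP2, nofun, PC2, nofun, PS2, ?_, L2, nofun, nofun,
    ?_, ?_, ?_, ?_, ?_⟩
  · intro s hk hs
    simp only [Option.some.injEq, Prod.mk.injEq] at hs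
    obtain ⟨h1, h2⟩ := hs; subst h1
    exact midpoint_mem_segment x₁ x₂
  · intro t s ht hk hs
    simp only [Option.some.injEq, Prod.mk.injEq] at hs
    have hb := PC2 t ht
    rw [hb] at hs
    exact absurd hs.2 (by decide)
  · intro s hk hs hk2 hp2
    simp only [Option.some.injEq, Prod.mk.injEq] at hs
    exact hs.1.symm
  · intro s hk2 hs hk1 _
    exact F2 s hk2 hs hk1 rfl
  · intro s s' hk1 hs1 hk2 hs2
    simp only [Option.some.injEq, Prod.mk.injEq] at hs1
    dsimp only at hk2
    rw [hk2] at hs1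
    exact absurd hs1.2 (by decide)
  · intro s s' hk2 hs2 hk1 hs1
    simp only [Option.some.injEq, Prod.mk.injEq] at hs1
    dsimp only at hk2
    rw [hk2] at hs1
    exact absurd hs1.2 (by decide)

private lemma fec_pres_compute {p q : EuclideanSpace ℝ (Fin 2)} {c : FECConfig}
    (hI : FECInv p q c) (s : EuclideanSpace ℝ (Fin 2) × RColor) (h : c.1.snap = some s) :
    FECInv p q ({ c.1 with
        col := (fecLC c.1.col s.2).1
        snap := none
        pending := if (fecLC c.1.col s.2).2 then some (midpoint ℝ c.1.pos s.1)
                   else none }, c.2) := by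
  obtain ⟨⟨x₁,k₁,sn₁,pd₁⟩, ⟨x₂,k₂,sn₂,pd₂⟩⟩ := c
  obtain ⟨sp, sc⟩ := s
  obtain ⟨P1,P2,SP1,SP2,PC1,PC2,PS1,PS2,L1,L2,EPP,EPS1,EPS2,F1,F2,NB1,NB2⟩ := hI
  dsimp only at *
  subst h
  have hpd1 : pd₁ = none := SP1 (by simp)
  subst hpd1
  cases k₁ <;> cases sc
  · -- Black sees Black : turn White, no move
    refine ⟨P1, P2, fun _ => rfl, SP2, nofun, PC2, nofun, PS2, nofun, L2, nofun, nofun,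
      nofun, nofun, ?_, nofun, nofun⟩
    intro s hk2 hs2 _ _
    exact (NB2 s sp hk2 hs2 rfl rfl).elim
  · -- Black sees White : stay Black, no move
    exact ⟨P1, P2, fun _ => rfl, SP2, nofun, PC2, nofun, PS2, nofun, L2, nofun, nofun,
      nofun, nofun, nofun, nofun, nofun⟩
  · -- White sees Black : stay White, no move
    refine ⟨P1, P2, fun _ => rfl, SP2, nofun, PC2, nofun, PS2, nofun, L2, nofun, nofun,
      nofun, nofun, ?_, nofun, nofun⟩
    intro s hk2 hs2 _ _
    exact F2 s hk2 hs2 rfl rfl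
  · -- White sees White : turn Black, move to midpoint
    have hpd2 : ∀ s', sn₂ = some s' → pd₂ = none := fun s' hs' => SP2 (by simp [hs'])
    refine ⟨P1, P2, fun h => absurd rfl h, SP2, fun _ _ => rfl, PC2, ?_, PS2, nofun, L2,
      ?_, ?_, nofun, nofun, nofun, nofun, nofun⟩
    · intro t ht
      injection ht with ht'
      subst ht'
      exact L1 sp rfl rfl
    · intro t₁ t₂ h1 h2
      injection h1 with h1'
      subst h1'
      exact (EPS2 t₂ sp h2 rfl rfl).symm
    · intro t s' ht hk2 hs2
      injection ht with ht'
      subst ht'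
      have e1 : sp = x₂ := F1 sp rfl rfl hk2 (hpd2 _ hs2)
      have e2 : s' = x₁ := F2 s' hk2 hs2 rfl rfl
      rw [e1, e2]
      exact midpoint_comm x₁ x₂

private lemma fec_pres_move {p q : EuclideanSpace ℝ (Fin 2)} {c : FECConfig}
    (hI : FECInv p q c) (t : EuclideanSpace ℝ (Fin 2)) (h : c.1.pending = some t)
    (y : EuclideanSpace ℝ (Fin 2)) (hy : y ∈ segment ℝ c.1.pos t) :
    FECInv p q ({ c.1 with pos := y, pending := none }, c.2) := by
  obtain ⟨⟨x₁,k₁,sn₁,pd₁⟩, ⟨x₂,k₂,sn₂,pd₂⟩⟩ := c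
  obtain ⟨P1,P2,SP1,SP2,PC1,PC2,PS1,PS2,L1,L2,EPP,EPS1,EPS2,F1,F2,NB1,NB2⟩ := hI
  dsimp only at *
  subst h
  have hk : k₁ = RColor.Black := PC1 t rfl
  subst hk
  have ht : t ∈ segment ℝ x₁ x₂ := PS1 t rfl
  obtain rfl : sn₁ = none := by
    cases hsn : sn₁ with
    | none => rfl
    | some s => exact absurd (SP1 (by simp [hsn])) (by simp)
  refine ⟨?_, P2, fun _ => rfl, SP2, nofun, PC2, nofun, ?_, nofun, ?_, nofun, nofun,
    nofun, nofun, nofun, nofun, nofun⟩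
  · exact (convex_segment p q).segment_subset P1 P2 (fec_seg_sub ht hy)
  · intro t₂ h₂
    obtain rfl : t = t₂ := EPP t t₂ rfl h₂
    exact fec_seg_shift ht hy
  · intro s hk2 hs2
    have e := EPS1 t s rfl hk2 hs2
    rw [← e]
    exact fec_seg_shift ht hy

private lemma fec_inv_preserve {p q : EuclideanSpace ℝ (Fin 2)} {c c' : FECConfig}
    (hI : FECInv p q c) (hs : FECStep c c') : FECInv p q c' := by
  cases hs with
  | look₁ h hp => exact fec_pres_look hI h hp
  | look₂ h hp => exact (fec_pres_look hI.swap h hp).swap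
  | compute₁ s h => exact fec_pres_compute hI s h
  | compute₂ s h => exact (fec_pres_compute hI.swap s h).swap
  | move₁ t h y hy => exact fec_pres_move hI t h y hy
  | move₂ t h y hy => exact (fec_pres_move hI.swap t h y hy).swap

private lemma fec_step_dist {p q : EuclideanSpace ℝ (Fin 2)} {c c' : FECConfig}
    (hI : FECInv p q c) (hs : FECStep c c') :
    dist c'.1.pos c'.2.pos + (dist c.1.pos c'.1.pos + dist c.2.pos c'.2.pos)
      ≤ dist c.1.pos c.2.pos := by
  cases hs with
  | look₁ h hp => simp
  | look₂ h hp => simp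
  | compute₁ s h => simp
  | compute₂ s h => simp
  | move₁ t h y hy =>
      have ht : t ∈ segment ℝ c.1.pos c.2.pos := hI.pseg₁ t h
      have hy' : y ∈ segment ℝ c.1.pos c.2.pos := fec_seg_sub ht hy
      have hd := dist_add_dist_of_mem_segment hy'
      dsimp only
      simp only [dist_self, add_zero]
      linarith [hd]
  | move₂ t h y hy =>
      have ht : t ∈ segment ℝ c.2.pos c.1.pos := by
        rw [segment_symm]; exact hI.pseg₂ t h
      have hy' : y ∈ segment ℝ c.2.pos c.1.pos := fec_seg_sub ht hy
      have hd := dist_add_dist_of_mem_segment hy'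
      dsimp only
      simp only [dist_self, zero_add]
      linarith [hd, dist_comm c.1.pos y, dist_comm c.1.pos c.2.pos,
        dist_comm c.2.pos y]

/-- under the FEC algorithm with no initial pending moves, along
any ASYNC execution both robots always lie on the initial segment `[p, q]`,
neither robot ever moves away from the other (the inter-robot distance never
increases), and the total distance traveled by both robots is at most the
initial distance `dist p q`. -/
theorem fec_fuel_efficient
    (p q : EuclideanSpace ℝ (Fin 2)) (col₁ col₂ : RColor)
    (c : ℕ → FECConfig)
    (h0 : c 0 = (⟨p, col₁, none, none⟩, ⟨q, col₂, none, none⟩))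
    (hstep : ∀ n, FECStep (c n) (c (n + 1)) ∨ c (n + 1) = c n) :
    (∀ n, (c n).1.pos ∈ segment ℝ p q ∧ (c n).2.pos ∈ segment ℝ p q) ∧
    (∀ n, dist ((c (n + 1)).1.pos) ((c (n + 1)).2.pos) ≤
      dist ((c n).1.pos) ((c n).2.pos)) ∧
    (∀ n, (∑ i ∈ Finset.range n,
        (dist ((c i).1.pos) ((c (i + 1)).1.pos) +
         dist ((c i).2.pos) ((c (i + 1)).2.pos))) ≤ dist p q) := by
  have hI : ∀ n, FECInv p q (c n) := by
    intro n
    induction n with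
    | zero =>
        rw [h0]
        exact ⟨left_mem_segment ℝ p q, right_mem_segment ℝ p q, fun _ => rfl,
          fun _ => rfl, nofun, nofun, nofun, nofun, nofun, nofun, nofun, nofun,
          nofun, nofun, nofun, nofun, nofun⟩
    | succ n ih =>
        rcases hstep n with h | h
        · exact fec_inv_preserve ih h
        · rwa [h]
  have hd : ∀ n, dist ((c (n+1)).1.pos) ((c (n+1)).2.pos) +
      (dist ((c n).1.pos) ((c (n+1)).1.pos) + dist ((c n).2.pos) ((c (n+1)).2.pos))
        ≤ dist ((c n).1.pos) ((c n).2.pos) := by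
    intro n
    rcases hstep n with h | h
    · exact fec_step_dist (hI n) h
    · rw [h]; simp
  refine ⟨fun n => ⟨(hI n).pos₁, (hI n).pos₂⟩, ?_, ?_⟩
  · intro n
    have h1 : (0:ℝ) ≤ dist ((c n).1.pos) ((c (n+1)).1.pos) := dist_nonneg
    have h2 : (0:ℝ) ≤ dist ((c n).2.pos) ((c (n+1)).2.pos) := dist_nonneg
    linarith [hd n]
  · have key : ∀ n, (∑ i ∈ Finset.range n,
        (dist ((c i).1.pos) ((c (i + 1)).1.pos) +
         dist ((c i).2.pos) ((c (i + 1)).2.pos))) +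
        dist ((c n).1.pos) ((c n).2.pos) ≤ dist p q := by
      intro n
      induction n with
      | zero => simp [h0]
      | succ n ih =>
          rw [Finset.sum_range_succ]
          have := hd n
          linarith
    intro n
    have h1 : (0:ℝ) ≤ dist ((c n).1.pos) ((c n).2.pos) := dist_nonneg
    linarith [key n]
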